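/- arXiv:1706.02299 — 5 statements merged into one kernel-verified Lean document; each statement's English description precedes it below -/
import Mathlib

section
/- Assume every 3-dimensional reflexive polytope Δ° is normal, i.e., every lattice point of kΔ is a sum of k lattice points of Δ (where Δ is the dual polytope). Let F be a facet of Δ° with dual vertex m_F and p a lattice point interior to F. Then for any lattice point m_f ∈ 4Δ, ⟨m_f, p⟩ = -4 if and only if m_f = 4·m_F, and for any m_g ∈ 6Δ, ⟨m_g, p⟩ = -6 if and only if m_g = 6·m_F. -/
open Finset

noncomputable section

abbrev V3 := Fin 3 → ℤ

def toR (v : V3) : Fin 3 → ℝ := fun i => (v i : ℝ)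

def pairZ (m v : V3) : ℤ := ∑ i, m i * v i

def latticePoly (V : Finset V3) : Set (Fin 3 → ℝ) := convexHull ℝ (toR '' (V : Set V3))

/-- `m` is a lattice point of the `k`-fold dilated dual polytope `kΔ`:
`⟨m, w⟩ ≥ -k` for every lattice point `w` of `Δ°`. -/
def DualMem (V : Finset V3) (k : ℤ) (m : V3) : Prop :=
  ∀ w : V3, toR w ∈ latticePoly V → -k ≤ pairZ m w

/-- Normality: every lattice point of `kΔ` is a sum of `k` lattice points of `Δ`. -/
def IsNormalDual (V : Finset V3) : Prop :=
  ∀ k : ℕ, 1 ≤ k → ∀ m : V3, DualMem V k m →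
    ∃ l : Fin k → V3, (∀ i, DualMem V 1 (l i)) ∧ ∑ i, l i = m

lemma pairZ_sum {n : ℕ} (l : Fin n → V3) (p : V3) :
    pairZ (∑ i, l i) p = ∑ i, pairZ (l i) p := by
  simp only [pairZ, Finset.sum_apply, Finset.sum_mul]
  rw [Finset.sum_comm]

lemma pairZ_smul (k : ℤ) (m p : V3) : pairZ (k • m) p = k * pairZ m p := by
  simp [pairZ, Finset.mul_sum, mul_assoc]

lemma key_extremal (V : Finset V3) (hnorm : IsNormalDual V)
    (mF : V3) (p : V3) (hpP : toR p ∈ latticePoly V)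
    (hp : ∀ m : V3, DualMem V 1 m → (pairZ m p = -1 ↔ m = mF))
    (hmFp : pairZ mF p = -1)
    (k : ℕ) (hk : 1 ≤ k) :
    ∀ m : V3, DualMem V k m → (pairZ m p = -(k : ℤ) ↔ m = (k : ℤ) • mF) := by
  intro m hm
  constructor
  · intro hpair
    obtain ⟨l, hl1, hlsum⟩ := hnorm k hk m hm
    have hsum : ∑ i, pairZ (l i) p = -(k : ℤ) := by
      rw [← pairZ_sum, hlsum, hpair]
    have hnn : ∀ i ∈ (Finset.univ : Finset (Fin k)), 0 ≤ pairZ (l i) p + 1 := by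
      intro i _
      have := hl1 i p hpP
      linarith
    have hzero : ∑ i, (pairZ (l i) p + 1) = 0 := by
      rw [Finset.sum_add_distrib, hsum]
      simp
    have heach : ∀ i ∈ (Finset.univ : Finset (Fin k)), pairZ (l i) p + 1 = 0 :=
      (Finset.sum_eq_zero_iff_of_nonneg hnn).mp hzero
    have hlm : ∀ i, l i = mF := by
      intro i
      exact (hp (l i) (hl1 i)).mp (by have := heach i (Finset.mem_univ i); linarith)
    rw [← hlsum]
    simp [hlm]
  · intro hm'
    subst hm'
    rw [pairZ_smul, hmFp]
    ring

/-- assuming normality, for a lattice point `p` interior to a facet `F`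
(characterized by: `⟨m,p⟩ = -1 ↔ m = m_F` for lattice points `m ∈ Δ`), a lattice point
`m_f ∈ 4Δ` has `⟨m_f, p⟩ = -4` iff `m_f = 4·m_F`, and `m_g ∈ 6Δ` has `⟨m_g, p⟩ = -6`
iff `m_g = 6·m_F`. -/
theorem four_six_extremal_unique (V : Finset V3) (hnorm : IsNormalDual V)
    (mF : V3) (hmF : DualMem V 1 mF)
    (p : V3) (hpP : toR p ∈ latticePoly V)
    (hp : ∀ m : V3, DualMem V 1 m → (pairZ m p = -1 ↔ m = mF)) :
    (∀ m : V3, DualMem V 4 m → (pairZ m p = -4 ↔ m = (4 : ℤ) • mF)) ∧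
    (∀ m : V3, DualMem V 6 m → (pairZ m p = -6 ↔ m = (6 : ℤ) • mF)) := by
  have hmFp : pairZ mF p = -1 := (hp mF hmF).mpr rfl
  refine ⟨?_, ?_⟩
  · have := key_extremal V hnorm mF p hpP hp hmFp 4 (by norm_num)
    intro m hm
    simpa using this m hm
  · have := key_extremal V hnorm mF p hpP hp hmFp 6 (by norm_num)
    intro m hm
    simpa using this m hm
end
end

section
/- Let Δ° be a 3d reflexive polytope with dual Δ, assumed normal. Suppose there exists a leaf v = a·v₁+b·v₂+c·v₃ above a facet F with height h_v ≥ 2 (v₁,v₂,v₃ ∈ F), and the fan of B contains v among its rays. Then for every lattice point p interior to F, there is no m ∈ 4Δ (satisfying ⟨m,w⟩ ≥ -4 for all rays w) with ⟨m,p⟩ = -4, and no m ∈ 6Δ (satisfying ⟨m,w⟩ ≥ -6 for all rays w) with ⟨m,p⟩ = -6; equivalently, every allowed f-monomial and g-monomial vanishes to positive multiplicity along the divisor D_p. -/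
open Finset

noncomputable section

lemma pairZ_sum_left {n : ℕ} (l : Fin n → V3) (w : V3) :
    pairZ (∑ i, l i) w = ∑ i, pairZ (l i) w := by
  simp only [pairZ, Finset.sum_apply, Finset.sum_mul]
  exact Finset.sum_comm

lemma pairZ_nsmul_left (k : ℕ) (m w : V3) : pairZ (k • m) w = k * pairZ m w := by
  simp [pairZ, Finset.mul_sum, Pi.smul_apply, nsmul_eq_mul, mul_assoc]

lemma pairZ_comb (m v₁ v₂ v₃ : V3) (a b c : ℕ) :
    pairZ m (a • v₁ + b • v₂ + c • v₃) =
      a * pairZ m v₁ + b * pairZ m v₂ + c * pairZ m v₃ := by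
  have h : ∀ i, m i * ((a • v₁ + b • v₂ + c • v₃) i) =
      (a : ℤ) * (m i * v₁ i) + (b : ℤ) * (m i * v₂ i) + (c : ℤ) * (m i * v₃ i) := by
    intro i
    simp only [Pi.add_apply, Pi.smul_apply, nsmul_eq_mul, Pi.mul_apply, Pi.natCast_apply]
    ring
  simp only [pairZ, h, Finset.sum_add_distrib, Finset.mul_sum]

lemma key_step (V : Finset V3) (hnorm : IsNormalDual V)
    (mF : V3)
    (v₁ v₂ v₃ : V3) (h1 : pairZ mF v₁ = -1) (h2 : pairZ mF v₂ = -1) (h3 : pairZ mF v₃ = -1)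
    (R : Set V3) (a b c : ℕ) (hh : 2 ≤ a + b + c)
    (hvR : (a • v₁ + b • v₂ + c • v₃) ∈ R)
    (p : V3) (hpP : toR p ∈ latticePoly V)
    (hp : ∀ m : V3, DualMem V 1 m → (pairZ m p = -1 ↔ m = mF))
    (k : ℕ) (hk : 1 ≤ k) (m : V3) (hm : DualMem V k m)
    (hR : ∀ w ∈ R, -(k : ℤ) ≤ pairZ m w) : 0 < pairZ m p + k := by
  obtain ⟨l, hl1, hlsum⟩ := hnorm k hk m hm
  have hterm : ∀ i, -1 ≤ pairZ (l i) p := fun i => hl1 i p hpP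
  have hsum : pairZ m p = ∑ i, pairZ (l i) p := by rw [← hlsum, pairZ_sum_left]
  by_contra h
  push_neg at h
  have hge : -(k : ℤ) ≤ pairZ m p := by
    rw [hsum]
    calc -(k : ℤ) = ∑ _i : Fin k, (-1 : ℤ) := by simp
    _ ≤ _ := Finset.sum_le_sum (fun i _ => hterm i)
  have heq : pairZ m p = -(k : ℤ) := le_antisymm (by linarith) hge
  have hzero : ∑ i, (pairZ (l i) p + 1) = 0 := by
    rw [Finset.sum_add_distrib, ← hsum, heq]; simp
  have heach : ∀ i, pairZ (l i) p = -1 := by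
    intro i
    have := (Finset.sum_eq_zero_iff_of_nonneg
      (fun i _ => by linarith [hterm i])).mp hzero i (Finset.mem_univ i)
    linarith
  have hlF : ∀ i, l i = mF := fun i => (hp (l i) (hl1 i)).mp (heach i)
  have hmk : m = k • mF := by
    rw [← hlsum]
    calc ∑ i, l i = ∑ _i : Fin k, mF := Finset.sum_congr rfl (fun i _ => hlF i)
    _ = k • mF := by simp
  have hleaf := hR _ hvR
  rw [pairZ_comb, hmk, pairZ_nsmul_left, pairZ_nsmul_left, pairZ_nsmul_left,
    h1, h2, h3] at hleaf
  have hk' : (1 : ℤ) ≤ (k : ℤ) := by exact_mod_cast hk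
  have hh' : (2 : ℤ) ≤ (a : ℤ) + b + c := by exact_mod_cast hh
  nlinarith

/-- if the fan of `B` contains a leaf `v = a·v₁+b·v₂+c·v₃` of height
`h_v = a+b+c ≥ 2` above the facet `F`, then for every lattice point `p` interior to `F`
no allowed `f`-monomial (`m ∈ 4Δ` with `⟨m,w⟩ ≥ -4` on all rays `w`) has `⟨m,p⟩ = -4`, and
no allowed `g`-monomial has `⟨m,p⟩ = -6`: all allowed monomials vanish to positive
multiplicity along `D_p`, i.e. there is a non-Higgsable seven-brane on `D_p`. -/
theorem tree_forces_nonHiggsable (V : Finset V3) (hnorm : IsNormalDual V)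
    (mF : V3) (hmF : DualMem V 1 mF)
    (v₁ v₂ v₃ : V3) (h1 : pairZ mF v₁ = -1) (h2 : pairZ mF v₂ = -1) (h3 : pairZ mF v₃ = -1)
    (R : Set V3) (a b c : ℕ) (hh : 2 ≤ a + b + c)
    (hvR : (a • v₁ + b • v₂ + c • v₃) ∈ R)
    (p : V3) (hpP : toR p ∈ latticePoly V) (hpR : p ∈ R)
    (hp : ∀ m : V3, DualMem V 1 m → (pairZ m p = -1 ↔ m = mF)) :
    (∀ m : V3, DualMem V 4 m → (∀ w ∈ R, -4 ≤ pairZ m w) → 0 < pairZ m p + 4) ∧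
    (∀ m : V3, DualMem V 6 m → (∀ w ∈ R, -6 ≤ pairZ m w) → 0 < pairZ m p + 6) := by
  constructor
  · intro m hm hR
    have := key_step V hnorm mF v₁ v₂ v₃ h1 h2 h3 R a b c hh hvR p hpP hp 4
      (by norm_num) m (by exact_mod_cast hm) (by exact_mod_cast hR)
    exact_mod_cast this
  · intro m hm hR
    have := key_step V hnorm mF v₁ v₂ v₃ h1 h2 h3 R a b c hh hvR p hpP hp 6
      (by norm_num) m (by exact_mod_cast hm) (by exact_mod_cast hR)
    exact_mod_cast this
end
end

section
/- Combined with the height criterion (which guarantees mult_v(g) ≤ 6 - h_v via the monomial m_F), if rays v₁,v₂,v₃ in facet F each carry non-Higgsable E8 and v = a·v₁+b·v₂+c·v₃ has height h_v = a+b+c, then the multiplicity of vanishing of g along D_v is exactly 6 - h_v. -/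
open Finset

noncomputable section

lemma pairZ_expand (m v₁ v₂ v₃ : V3) (a b c : ℕ) :
    pairZ m (a • v₁ + b • v₂ + c • v₃) =
      (a : ℤ) * pairZ m v₁ + (b : ℤ) * pairZ m v₂ + (c : ℤ) * pairZ m v₃ := by
  simp only [pairZ, Fin.sum_univ_three, Pi.add_apply, Pi.smul_apply, smul_eq_mul]
  ring

/-- if rays `v₁,v₂,v₃` each carry non-Higgsable E8 (so `⟨m_g,v_i⟩ ≥ -1` for
all allowed g-monomials) and the facet dual vertex `m_F` is an allowed g-monomial with
`⟨m_F,v_i⟩ = -1`, then for the leaf `v = a·v₁+b·v₂+c·v₃` of height `h_v = a+b+c` the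
multiplicity of vanishing of `g` along `D_v`, i.e. the least value of `⟨m_g,v⟩ + 6` over
allowed g-monomials, is exactly `6 - h_v`. -/
theorem g_multiplicity_exact (Ag : Set V3) (mF v₁ v₂ v₃ : V3) (hmF : mF ∈ Ag)
    (h1 : pairZ mF v₁ = -1) (h2 : pairZ mF v₂ = -1) (h3 : pairZ mF v₃ = -1)
    (hE8 : ∀ m ∈ Ag, -1 ≤ pairZ m v₁ ∧ -1 ≤ pairZ m v₂ ∧ -1 ≤ pairZ m v₃)
    (a b c : ℕ) (ha : 0 < a) (hb : 0 < b) (hc : 0 < c) :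
    IsLeast ((fun m => pairZ m (a • v₁ + b • v₂ + c • v₃) + 6) '' Ag)
      (6 - (a + b + c : ℤ)) := by
  constructor
  · exact ⟨mF, hmF, by simp only [pairZ_expand, h1, h2, h3]; ring⟩
  · rintro x ⟨m, hm, rfl⟩
    obtain ⟨e1, e2, e3⟩ := hE8 m hm
    simp only [pairZ_expand]
    nlinarith [mul_le_mul_of_nonneg_left e1 (by positivity : (0:ℤ) ≤ a),
      mul_le_mul_of_nonneg_left e2 (by positivity : (0:ℤ) ≤ b),
      mul_le_mul_of_nonneg_left e3 (by positivity : (0:ℤ) ≤ c)]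
end
end

section
/- Let Δ₂° be the convex hull of {(-1,-1,-1), (-1,-1,11), (-1,2,-1), (1,-1,-1)} in ℤ³. Then Δ₂° is a reflexive polytope. -/
open Finset

noncomputable section

def pairR (m v : Fin 3 → ℝ) : ℝ := ∑ i, m i * v i

def polarDual (P : Set (Fin 3 → ℝ)) : Set (Fin 3 → ℝ) := {m | ∀ v ∈ P, -1 ≤ pairR m v}

/-- Reflexivity: the origin is interior, it is the unique interior lattice point, and the
polar dual is again a lattice polytope. -/
def IsReflexive (V : Finset V3) : Prop :=
  (0 : Fin 3 → ℝ) ∈ interior (latticePoly V) ∧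
  (∀ v : V3, toR v ∈ interior (latticePoly V) → v = 0) ∧
  ∃ W : Finset V3, polarDual (latticePoly V) = latticePoly W

/-- The polytope `Δ₂° = Conv{(-1,-1,-1), (-1,-1,11), (-1,2,-1), (1,-1,-1)}`. -/
def Delta2 : Finset V3 :=
  {![(-1 : ℤ), -1, -1], ![(-1 : ℤ), -1, 11], ![(-1 : ℤ), 2, -1], ![(1 : ℤ), -1, -1]}

open Topology Filter Matrix

/-! `Δ₂°` is a simplex, and its vertices `vᵢ` and the lattice vectors
`u₀ = (-6,-4,-1)`, `u₁ = (0,0,1)`, `u₂ = (0,1,0)`, `u₃ = (1,0,0)` satisfy `⟨vᵢ, uⱼ⟩ = -1`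
for `i ≠ j` and `⟨vᵢ, uᵢ⟩ > -1`. For such a pair of families, writing a point in barycentric
coordinates `x = ∑ μᵢ vᵢ` gives `⟨x, uₖ⟩ + 1 = μₖ (⟨vₖ, uₖ⟩ + 1)`, so
`conv {vᵢ} = {x | ∀ k, ⟨x, uₖ⟩ ≥ -1}`, and symmetrically with the roles exchanged. Hence the
polar dual of `Δ₂°` is the lattice simplex `conv {uⱼ}`, and an interior lattice point `x` has
`⟨x, uⱼ⟩ > -1`, i.e. `⟨x, uⱼ⟩ ≥ 0`, for all `j`, which forces `x = 0`.
-/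

theorem pairR_eq_dotProduct (m v : Fin 3 → ℝ) : pairR m v = m ⬝ᵥ v := rfl

theorem pairR_toR (u v : V3) : pairR (toR u) (toR v) = ((u ⬝ᵥ v : ℤ) : ℝ) := by
  simp [pairR, toR, dotProduct]

theorem convex_polarDual (P : Set (Fin 3 → ℝ)) : Convex ℝ (polarDual P) := by
  simp only [polarDual, Set.ofPred_forall]
  exact convex_iInter₂ fun v _ => convex_halfSpace_ge (f := fun m => pairR m v)
    ⟨fun x y => by simp [pairR_eq_dotProduct, add_dotProduct],
     fun c x => by simp [pairR_eq_dotProduct, smul_dotProduct]⟩ (-1)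

theorem polarDual_convexHull (s : Set (Fin 3 → ℝ)) : polarDual (convexHull ℝ s) = polarDual s := by
  refine subset_antisymm (fun m hm v hv => hm v (subset_convexHull ℝ s hv)) fun m hm => ?_
  have hconv : Convex ℝ {v | -1 ≤ pairR m v} := by
    simpa [polarDual, pairR_eq_dotProduct, dotProduct_comm m] using convex_polarDual {m}
  exact fun v hv => convexHull_min hm hconv hv

theorem zero_mem_interior_polarDual {s : Set (Fin 3 → ℝ)} (hs : s.Finite) :
    (0 : Fin 3 → ℝ) ∈ interior (polarDual s) := by
  have hopen : IsOpen {m : Fin 3 → ℝ | ∀ v ∈ s, -1 < pairR m v} := by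
    simp only [Set.ofPred_forall]
    exact hs.isOpen_biInter fun v _ => isOpen_lt continuous_const (by unfold pairR; fun_prop)
  exact mem_interior.mpr ⟨_, fun m hm v hv => (hm v hv).le, hopen, by simp [pairR]⟩

theorem neg_one_lt_pairR_of_mem_interior_polarDual {s : Set (Fin 3 → ℝ)} {x v : Fin 3 → ℝ}
    (hx : x ∈ interior (polarDual s)) (hv : v ∈ s) : -1 < pairR x v := by
  rcases eq_or_ne v 0 with rfl | hv0
  · simp [pairR]
  have hnear : ∀ᶠ t in 𝓝[>] (0 : ℝ), x - t • v ∈ interior (polarDual s) := by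
    have hline : Continuous fun t : ℝ => x - t • v := by fun_prop
    exact nhdsWithin_le_nhds
      ((hline.tendsto' 0 x (by simp)).eventually (isOpen_interior.mem_nhds hx))
  obtain ⟨t, hxt, ht⟩ := (hnear.and self_mem_nhdsWithin).exists
  have hbound := interior_subset hxt v hv
  have hvv : 0 < v ⬝ᵥ v := by simpa using dotProduct_self_star_pos_iff.mpr hv0
  rw [pairR_eq_dotProduct, sub_dotProduct, smul_dotProduct, smul_eq_mul] at hbound
  rw [pairR_eq_dotProduct]
  nlinarith [mul_pos (Set.mem_Ioi.mp ht) hvv]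

structure IsPolarPair {ι : Type*} (a b : ι → Fin 3 → ℝ) : Prop where
  pairR_of_ne : ∀ i j, i ≠ j → pairR (a i) (b j) = -1
  neg_one_lt_pairR_self : ∀ i, -1 < pairR (a i) (b i)

namespace IsPolarPair

variable {ι : Type*} {a b : ι → Fin 3 → ℝ}

theorem symm (h : IsPolarPair a b) : IsPolarPair b a where
  pairR_of_ne i j hij := by
    rw [pairR_eq_dotProduct, dotProduct_comm]; exact h.pairR_of_ne j i hij.symm
  neg_one_lt_pairR_self i := by
    rw [pairR_eq_dotProduct, dotProduct_comm]; exact h.neg_one_lt_pairR_self i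

variable [Fintype ι]

theorem pairR_sum_smul (h : IsPolarPair a b) (μ : ι → ℝ) (k : ι) :
    pairR (∑ i, μ i • a i) (b k) = μ k * (pairR (a k) (b k) + 1) - ∑ i, μ i := by
  classical
  have hterm : ∀ i, μ i * pairR (a i) (b k) =
      (if i = k then μ k * (pairR (a k) (b k) + 1) else 0) - μ i := by
    intro i
    split_ifs with hik
    · subst hik; ring
    · rw [h.pairR_of_ne i k hik]; ring
  simp only [pairR_eq_dotProduct, sum_dotProduct, smul_dotProduct, smul_eq_mul] at hterm ⊢
  rw [Finset.sum_congr rfl fun i _ => hterm i, Finset.sum_sub_distrib, Finset.sum_ite_eq']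
  simp

theorem affineIndependent (h : IsPolarPair a b) : AffineIndependent ℝ a := by
  rw [affineIndependent_iff_of_fintype]
  intro μ hμ hzero k
  rw [Finset.weightedVSub_eq_linear_combination _ hμ] at hzero
  have hk := h.pairR_sum_smul μ k
  rw [hzero, hμ] at hk
  have hpos : 0 < pairR (a k) (b k) + 1 := by linarith [h.neg_one_lt_pairR_self k]
  have : μ k * (pairR (a k) (b k) + 1) = 0 := by simpa [pairR] using hk.symm
  exact (mul_eq_zero.mp this).resolve_right hpos.ne'

theorem convexHull_eq_polarDual (h : IsPolarPair a b) (hcard : Fintype.card ι = 4) :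
    convexHull ℝ (Set.range a) = polarDual (Set.range b) := by
  refine subset_antisymm (convexHull_min ?_ (convex_polarDual _)) fun x hx => ?_
  · rintro _ ⟨i, rfl⟩ _ ⟨j, rfl⟩
    rcases eq_or_ne i j with rfl | hij
    · exact (h.neg_one_lt_pairR_self i).le
    · exact (h.pairR_of_ne i j hij).ge
  have hspan : affineSpan ℝ (Set.range a) = ⊤ :=
    h.affineIndependent.affineSpan_eq_top_iff_card_eq_finrank_add_one.mpr (by simp [hcard])
  obtain ⟨μ, hμ, rfl⟩ := eq_affineCombination_of_mem_affineSpan_of_fintype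
    (hspan ▸ AffineSubspace.mem_top ℝ _ x)
  rw [Finset.affineCombination_eq_linear_combination _ _ _ hμ] at hx ⊢
  refine (convex_convexHull ℝ _).sum_mem (fun k _ => ?_) hμ
    fun i _ => subset_convexHull ℝ _ (Set.mem_range_self i)
  have hk := hx (b k) (Set.mem_range_self k)
  rw [h.pairR_sum_smul, hμ] at hk
  nlinarith [h.neg_one_lt_pairR_self k]

end IsPolarPair

theorem latticePoly_image {ι : Type*} [Fintype ι] (f : ι → V3) :
    latticePoly (univ.image f) = convexHull ℝ (Set.range (toR ∘ f)) := by
  rw [latticePoly, coe_image, coe_univ, Set.image_univ, Set.range_comp]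

def delta2Vertex : Fin 4 → V3 := ![![-1, -1, -1], ![-1, -1, 11], ![-1, 2, -1], ![1, -1, -1]]

def delta2Normal : Fin 4 → V3 := ![![-6, -4, -1], ![0, 0, 1], ![0, 1, 0], ![1, 0, 0]]

theorem Delta2_eq_image : Delta2 = univ.image delta2Vertex := by decide

theorem isPolarPair_delta2 : IsPolarPair (toR ∘ delta2Vertex) (toR ∘ delta2Normal) where
  pairR_of_ne i j hij := by
    have hint : ∀ i j, i ≠ j → delta2Vertex i ⬝ᵥ delta2Normal j = -1 := by decide
    simp only [Function.comp_apply, pairR_toR, hint i j hij, Int.cast_neg, Int.cast_one]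
  neg_one_lt_pairR_self i := by
    have hint : ∀ i, -1 < delta2Vertex i ⬝ᵥ delta2Normal i := by decide
    simp only [Function.comp_apply, pairR_toR]
    exact_mod_cast hint i

theorem eq_zero_of_forall_dotProduct_delta2Normal_nonneg (v : V3)
    (h : ∀ j, 0 ≤ v ⬝ᵥ delta2Normal j) : v = 0 := by
  have h0 : 0 ≤ v 0 * -6 + v 1 * -4 + v 2 * -1 := by
    simpa [dotProduct, Fin.sum_univ_three, delta2Normal] using h 0
  have h1 : 0 ≤ v 2 := by simpa [dotProduct, Fin.sum_univ_three, delta2Normal] using h 1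
  have h2 : 0 ≤ v 1 := by simpa [dotProduct, Fin.sum_univ_three, delta2Normal] using h 2
  have h3 : 0 ≤ v 0 := by simpa [dotProduct, Fin.sum_univ_three, delta2Normal] using h 3
  ext i
  fin_cases i
  · show v 0 = 0; omega
  · show v 1 = 0; omega
  · show v 2 = 0; omega

/-- `Δ₂°` is a reflexive polytope. -/
theorem Delta2_isReflexive : IsReflexive Delta2 := by
  have hΔ : latticePoly Delta2 = polarDual (Set.range (toR ∘ delta2Normal)) := by
    rw [Delta2_eq_image, latticePoly_image, isPolarPair_delta2.convexHull_eq_polarDual (by simp)]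
  refine ⟨?_, fun v hv => ?_, univ.image delta2Normal, ?_⟩
  · rw [hΔ]
    exact zero_mem_interior_polarDual (Set.finite_range _)
  · rw [hΔ] at hv
    refine eq_zero_of_forall_dotProduct_delta2Normal_nonneg v fun j => ?_
    have hj := neg_one_lt_pairR_of_mem_interior_polarDual hv (Set.mem_range_self j)
    rw [Function.comp_apply, pairR_toR] at hj
    have : (-1 : ℤ) < v ⬝ᵥ delta2Normal j := by exact_mod_cast hj
    omega
  · rw [Delta2_eq_image, latticePoly_image, polarDual_convexHull, latticePoly_image,
      isPolarPair_delta2.symm.convexHull_eq_polarDual (by simp)]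
end
end

section
/- Let Δ° be a 3d reflexive polytope, F a facet with dual vertex m_F, and suppose the fan has rays v_s = Σᵢ a_{i,s} vᵢ and v_t = Σᵢ a_{i,t} vᵢ (vᵢ lattice points of F) with heights a = Σᵢ a_{i,s} ≥ 1 and b = Σᵢ a_{i,t} ≥ 1. Then the monomial m_F ∈ 6Δ vanishes along the curve D_s ∩ D_t to multiplicity (⟨m_F,v_s⟩+6) + (⟨m_F,v_t⟩+6) = 12 - a - b < 12; in particular g cannot be forced to vanish to multiplicity ≥ 12 along any such toric curve. -/
open Finset

noncomputable section

lemma pairZ_sum_s16 {k : ℕ} (vs : Fin k → V3) (mF : V3)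
    (hmF : ∀ i, pairZ mF (vs i) = -1) (c : Fin k → ℕ) :
    pairZ mF (∑ i, c i • vs i) = -((∑ i, c i : ℕ) : ℤ) := by
  unfold pairZ at *
  simp only [Finset.sum_apply, Pi.smul_apply, smul_eq_mul, nsmul_eq_mul, Pi.mul_apply, Pi.natCast_apply, Finset.mul_sum]
  rw [Finset.sum_comm]
  have h : ∀ j : Fin k, ∑ i, mF i * ((c j : ℤ) * vs j i) = -(c j : ℤ) := by
    intro j
    calc ∑ i, mF i * ((c j : ℤ) * vs j i) = (c j : ℤ) * ∑ i, mF i * vs j i := by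
          rw [Finset.mul_sum]; congr 1; ext i; ring
      _ = -(c j : ℤ) := by rw [hmF j]; ring
  rw [Finset.sum_congr rfl (fun j _ => h j), Finset.sum_neg_distrib, Nat.cast_sum]

/-- if `v_s = Σᵢ a_{i,s} vᵢ` and `v_t = Σᵢ a_{i,t} vᵢ` are rays over lattice
points `vᵢ` of a facet `F` with dual vertex `m_F` (so `⟨m_F, vᵢ⟩ = -1`), with heights
`a = Σᵢ a_{i,s} ≥ 1` and `b = Σᵢ a_{i,t} ≥ 1`, then the monomial `m_F ∈ 6Δ` vanishes along
the toric curve `D_s ∩ D_t` to multiplicity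
`(⟨m_F,v_s⟩+6) + (⟨m_F,v_t⟩+6) = 12 - a - b < 12`. -/
theorem curve_multiplicity_from_mF (k : ℕ) (vs : Fin k → V3) (mF : V3)
    (hmF : ∀ i, pairZ mF (vs i) = -1)
    (as at' : Fin k → ℕ) (ha : 1 ≤ ∑ i, as i) (hb : 1 ≤ ∑ i, at' i) :
    (pairZ mF (∑ i, as i • vs i) + 6) + (pairZ mF (∑ i, at' i • vs i) + 6) =
      12 - ((∑ i, as i : ℕ) : ℤ) - ((∑ i, at' i : ℕ) : ℤ) ∧
    (pairZ mF (∑ i, as i • vs i) + 6) + (pairZ mF (∑ i, at' i • vs i) + 6) < 12 := by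
  rw [pairZ_sum_s16 vs mF hmF as, pairZ_sum_s16 vs mF hmF at']
  constructor
  · ring
  · have h1 : (1 : ℤ) ≤ ((∑ i, as i : ℕ) : ℤ) := by exact_mod_cast ha
    have h2 : (1 : ℤ) ≤ ((∑ i, at' i : ℕ) : ℤ) := by exact_mod_cast hb
    linarith
end
end
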